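/- arXiv:2108.13127 — 4 statements merged into one kernel-verified Lean document; each statement's English description precedes it below -/
import Mathlib

section
/- Let 0 < a < b and 2 < μ < 3, and let G be the Green's function defined by G(t,τ) = (1/(Γ(μ)·(ln(b/a))^(μ-1))) · [ (ln(t/a))^(μ-1)·(ln(b/τ))^(μ-1) − (ln(t/τ))^(μ-1)·(ln(b/a))^(μ-1) ] for a ≤ τ ≤ t ≤ b, and G(t,τ) = (1/(Γ(μ)·(ln(b/a))^(μ-1))) · (ln(t/a))^(μ-1)·(ln(b/τ))^(μ-1) for a ≤ t ≤ τ ≤ b. Then for all t, τ ∈ [a, b], G(t,τ) ≤ u(t)/(Γ(μ)·ln(b/a)), where u(t) = (ln(t/a))^(μ-1)·(ln(b/t)). -/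
/-
In the coordinates x = log(t/a), y = log(τ/a), L = log(b/a) and β = μ - 1 ≥ 1, the bound reads
x^β (L-y)^β - (x-y)^β L^β ≤ x^β (L-x) L^(β-1) for y ≤ x, and x^β (L-y)^β ≤ x^β (L-x) L^(β-1)
for x < y. The second follows from (L-y)^β ≤ L^(β-1) (L-y). The first comes from convexity of
s ↦ s^β: x (L-y) is the convex combination of x L and (x-y) L with weights (L-x)/L and x/L.
-/

noncomputable def G (a b μ : ℝ) (t τ : ℝ) : ℝ :=
  if τ ≤ t then
    (1 / (Real.Gamma μ * Real.log (b / a) ^ (μ - 1))) *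
      (Real.log (t / a) ^ (μ - 1) * Real.log (b / τ) ^ (μ - 1) -
        Real.log (t / τ) ^ (μ - 1) * Real.log (b / a) ^ (μ - 1))
  else
    (1 / (Real.Gamma μ * Real.log (b / a) ^ (μ - 1))) *
      (Real.log (t / a) ^ (μ - 1) * Real.log (b / τ) ^ (μ - 1))

open Real

section RpowInequalities

variable {β L x y : ℝ}

lemma rpow_eq_rpow_sub_one_mul (hL : 0 < L) (β : ℝ) : L ^ β = L ^ (β - 1) * L := by
  rw [← rpow_add_one hL.ne']
  ring_nf

lemma rpow_le_rpow_sub_one_mul_self (hβ : 1 ≤ β) (hx0 : 0 ≤ x) (hxL : x ≤ L) :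
    x ^ β ≤ L ^ (β - 1) * x := by
  rcases hx0.eq_or_lt with rfl | hx
  · simp [zero_rpow (by linarith : β ≠ 0)]
  · rw [rpow_eq_rpow_sub_one_mul hx]
    gcongr

lemma mul_rpow_mul_sub_le (hβ : 1 ≤ β) (hL : 0 < L) (hx0 : 0 ≤ x) (hxL : x ≤ L)
    (hyx : y ≤ x) :
    L * (x * (L - y)) ^ β ≤ (L - x) * (x * L) ^ β + x * ((x - y) * L) ^ β := by
  have hw₁ : 0 ≤ (L - x) / L := div_nonneg (by linarith) hL.le
  have hw₂ : 0 ≤ x / L := div_nonneg hx0 hL.le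
  have hconv := (convexOn_rpow hβ).2 (Set.mem_Ici.2 (by positivity : 0 ≤ x * L))
    (Set.mem_Ici.2 (mul_nonneg (by linarith) hL.le : 0 ≤ (x - y) * L)) hw₁ hw₂
    (by field_simp; ring)
  simp only [smul_eq_mul] at hconv
  calc L * (x * (L - y)) ^ β
      = L * ((L - x) / L * (x * L) + x / L * ((x - y) * L)) ^ β := by
        congr 2
        field_simp
        ring
    _ ≤ L * ((L - x) / L * (x * L) ^ β + x / L * ((x - y) * L) ^ β) :=
        mul_le_mul_of_nonneg_left hconv hL.le
    _ = (L - x) * (x * L) ^ β + x * ((x - y) * L) ^ β := by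
        field_simp

lemma rpow_mul_sub_rpow_mul_le (hβ : 1 ≤ β) (hL : 0 < L) (hx0 : 0 ≤ x) (hxL : x ≤ L)
    (hyx : y ≤ x) :
    x ^ β * (L - y) ^ β - (x - y) ^ β * L ^ β ≤ x ^ β * (L - x) * L ^ (β - 1) := by
  have h := mul_rpow_mul_sub_le hβ hL hx0 hxL hyx
  rw [mul_rpow hx0 (by linarith), mul_rpow hx0 hL.le, mul_rpow (by linarith) hL.le,
    rpow_eq_rpow_sub_one_mul hL β] at h
  rw [rpow_eq_rpow_sub_one_mul hL β]
  have hxy : 0 ≤ (x - y) ^ β * L ^ (β - 1) :=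
    mul_nonneg (rpow_nonneg (by linarith) β) (rpow_nonneg hL.le _)
  nlinarith [mul_nonneg hxy (sub_nonneg.2 hxL)]

lemma rpow_mul_rpow_le_of_le (hβ : 1 ≤ β) (hx0 : 0 ≤ x) (hxy : x ≤ y) (hyL : y ≤ L) :
    x ^ β * (L - y) ^ β ≤ x ^ β * (L - x) * L ^ (β - 1) := by
  calc x ^ β * (L - y) ^ β
      ≤ x ^ β * (L ^ (β - 1) * (L - y)) := by
        gcongr
        exact rpow_le_rpow_sub_one_mul_self hβ (by linarith) (by linarith)
    _ ≤ x ^ β * (L - x) * L ^ (β - 1) := by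
        have : 0 ≤ L ^ (β - 1) := rpow_nonneg (hx0.trans (hxy.trans hyL)) _
        rw [mul_comm (L ^ (β - 1)), ← mul_assoc]
        gcongr

lemma one_div_mul_le_div_of_le_mul_rpow {Γ P Q : ℝ} (hΓ : 0 < Γ) (hL : 0 < L)
    (h : P ≤ Q * L ^ (β - 1)) :
    1 / (Γ * L ^ β) * P ≤ Q / (Γ * L) := by
  have hLβ : 0 < L ^ (β - 1) := rpow_pos_of_pos hL _
  rw [rpow_eq_rpow_sub_one_mul hL β]
  calc 1 / (Γ * (L ^ (β - 1) * L)) * P ≤ 1 / (Γ * (L ^ (β - 1) * L)) * (Q * L ^ (β - 1)) := by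
        gcongr
    _ = Q / (Γ * L) := by field_simp

end RpowInequalities

lemma log_div_eq_log_div_sub_log_div {a b c : ℝ} (ha : 0 < a) (hb : 0 < b) (hc : 0 < c) :
    log (c / b) = log (c / a) - log (b / a) := by
  rw [log_div hc.ne' hb.ne', log_div hc.ne' ha.ne', log_div hb.ne' ha.ne']
  ring

theorem stmt_3_general (a b μ : ℝ) (ha : 0 < a) (hab : a < b) (hμ2 : 2 < μ) :
    ∀ t ∈ Set.Icc a b, ∀ τ ∈ Set.Icc a b,
      G a b μ t τ ≤
        (Real.log (t / a) ^ (μ - 1) * Real.log (b / t)) / (Real.Gamma μ * Real.log (b / a)) := by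
  rintro t ⟨hat, htb⟩ τ ⟨haτ, hτb⟩
  have ht : 0 < t := ha.trans_le hat
  have hτ : 0 < τ := ha.trans_le haτ
  have hb : 0 < b := ha.trans hab
  have hΓ : 0 < Gamma μ := Gamma_pos_of_pos (by linarith)
  have hβ : 1 ≤ μ - 1 := by linarith
  have hL : 0 < log (b / a) := log_pos ((one_lt_div ha).2 hab)
  have hx0 : 0 ≤ log (t / a) := log_nonneg ((one_le_div ha).2 hat)
  have hxL : log (t / a) ≤ log (b / a) := log_le_log (div_pos ht ha) (by gcongr)
  have hyL : log (τ / a) ≤ log (b / a) := log_le_log (div_pos hτ ha) (by gcongr)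
  unfold G
  rw [log_div_eq_log_div_sub_log_div ha hτ hb, log_div_eq_log_div_sub_log_div ha ht hb]
  split_ifs with hτt
  · rw [log_div_eq_log_div_sub_log_div ha hτ ht]
    exact one_div_mul_le_div_of_le_mul_rpow hΓ hL
      (rpow_mul_sub_rpow_mul_le hβ hL hx0 hxL (log_le_log (div_pos hτ ha) (by gcongr)))
  · exact one_div_mul_le_div_of_le_mul_rpow hΓ hL
      (rpow_mul_rpow_le_of_le hβ hx0 (log_le_log (div_pos ht ha) (by gcongr; linarith)) hyL)

theorem stmt_3 (a b μ : ℝ) (ha : 0 < a) (hab : a < b) (hμ2 : 2 < μ) (hμ3 : μ < 3) :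
    ∀ t ∈ Set.Icc a b, ∀ τ ∈ Set.Icc a b,
      G a b μ t τ ≤
        (Real.log (t / a) ^ (μ - 1) * Real.log (b / t)) / (Real.Gamma μ * Real.log (b / a)) :=
  stmt_3_general a b μ ha hab hμ2
end

section
/- Let 0 < a < b and 2 < μ < 3, and let G be the Green's function defined by G(t,τ) = (1/(Γ(μ)·(ln(b/a))^(μ-1))) · [ (ln(t/a))^(μ-1)·(ln(b/τ))^(μ-1) − (ln(t/τ))^(μ-1)·(ln(b/a))^(μ-1) ] for a ≤ τ ≤ t ≤ b, and G(t,τ) = (1/(Γ(μ)·(ln(b/a))^(μ-1))) · (ln(t/a))^(μ-1)·(ln(b/τ))^(μ-1) for a ≤ t ≤ τ ≤ b. Then for all t, τ ∈ [a, b], G(t,τ) ≤ v(τ)/(Γ(μ)·ln(b/a)), where v(τ) = (ln(τ/a))·(ln(b/τ))^(μ-1). -/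
/-!
With `L = log (b/a)`, `x = log (t/a)`, `s = log (τ/a)` and `q = μ - 1 ≥ 1`, the claim reads
`x^q (L-s)^q - (x-s)^q L^q ≤ s (L-s)^q L^(q-1)` for `s ≤ x` and `x^q (L-s)^q ≤ s (L-s)^q L^(q-1)`
for `x ≤ s`. The second is monotonicity. For the first, if `x^q ≤ s L^(q-1)` the positive term
alone is small enough; otherwise two tangent-line bounds for the convex function `y ↦ y^q`
suffice: at `x (L-s)`, evaluated at `(x-s) L`, it bounds the difference by
`q x^(q-1) (L-s)^(q-1) s (L-x)`, and at `x`, evaluated at `L`, it gives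
`q x^(q-1) (L-x) ≤ L^q - x^q < L^(q-1) (L-s)`.
-/

open Real

namespace Real

lemma rpow_eq_mul_rpow_sub_one {x q : ℝ} (hx : 0 ≤ x) (hq : 1 ≤ q) :
    x ^ q = x * x ^ (q - 1) := by
  simpa using rpow_one_add' hx (y := q - 1) (by linarith)

lemma rpow_add_mul_rpow_sub_one_mul_sub_le {q X Y : ℝ} (hq : 1 ≤ q) (hX : 0 ≤ X) (hY : 0 ≤ Y) :
    X ^ q + q * X ^ (q - 1) * (Y - X) ≤ Y ^ q := by
  rcases hX.eq_or_lt with rfl | hX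
  · rcases hq.eq_or_lt with rfl | hq
    · simp
    · simp [zero_rpow (by linarith : q ≠ 0), zero_rpow (by linarith : q - 1 ≠ 0),
        rpow_nonneg hY]
  · have h := one_add_mul_self_le_rpow_one_add (s := Y / X - 1)
      (by linarith [div_nonneg hY hX.le]) hq
    rw [add_sub_cancel, div_rpow hY hX.le, le_div_iff₀ (rpow_pos_of_pos hX q)] at h
    calc X ^ q + q * X ^ (q - 1) * (Y - X) = (1 + q * (Y / X - 1)) * X ^ q := by
          rw [rpow_sub_one hX.ne']; field_simp
      _ ≤ Y ^ q := h

end Real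

section GreenBound

variable {q L s x : ℝ}

lemma mul_rpow_sub_rpow_mul_le (hq : 1 ≤ q) (hs : 0 ≤ s) (hsx : s ≤ x) (hxL : x ≤ L) :
    x ^ q * (L - s) ^ q - (x - s) ^ q * L ^ q ≤ s * (L - s) ^ q * L ^ (q - 1) := by
  have hx : 0 ≤ x := hs.trans hsx
  have hLs : 0 ≤ L - s := by linarith
  have hL : 0 ≤ L := hx.trans hxL
  have hLq := rpow_eq_mul_rpow_sub_one hL hq
  rcases le_or_gt (x ^ q) (s * L ^ (q - 1)) with hsmall | hlarge
  · linarith [mul_le_mul_of_nonneg_right hsmall (rpow_nonneg hLs q),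
      mul_nonneg (rpow_nonneg (sub_nonneg.2 hsx) q) (rpow_nonneg hL q)]
  · have htangent_L := rpow_add_mul_rpow_sub_one_mul_sub_le hq hx hL
    have hfactor : q * x ^ (q - 1) * (L - x) ≤ (L - s) * L ^ (q - 1) := by linarith
    have htangent := rpow_add_mul_rpow_sub_one_mul_sub_le hq (mul_nonneg hx hLs)
      (mul_nonneg (sub_nonneg.2 hsx) hL)
    rw [mul_rpow hx hLs, mul_rpow hx hLs, mul_rpow (sub_nonneg.2 hsx) hL] at htangent
    calc x ^ q * (L - s) ^ q - (x - s) ^ q * L ^ q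
        ≤ q * x ^ (q - 1) * (L - x) * (s * (L - s) ^ (q - 1)) := by linear_combination htangent
      _ ≤ (L - s) * L ^ (q - 1) * (s * (L - s) ^ (q - 1)) :=
        mul_le_mul_of_nonneg_right hfactor (mul_nonneg hs (rpow_nonneg hLs (q - 1)))
      _ = s * (L - s) ^ q * L ^ (q - 1) := by rw [rpow_eq_mul_rpow_sub_one hLs hq]; ring

lemma rpow_le_mul_rpow_sub_one (hq : 1 ≤ q) (hx : 0 ≤ x) (hxs : x ≤ s) (hxL : x ≤ L) :
    x ^ q ≤ s * L ^ (q - 1) := by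
  rw [rpow_eq_mul_rpow_sub_one hx hq]
  exact mul_le_mul hxs (rpow_le_rpow hx hxL (by linarith)) (rpow_nonneg hx _) (hx.trans hxs)

lemma one_div_mul_le_div_of_le_mul_rpow_sub_one {c N M : ℝ} (hc : 0 < c) (hL : 0 < L)
    (h : N ≤ M * L ^ (q - 1)) : 1 / (c * L ^ q) * N ≤ M / (c * L) := by
  calc 1 / (c * L ^ q) * N ≤ 1 / (c * L ^ q) * (M * L ^ (q - 1)) := by gcongr
    _ = M / (c * L) := by
      rw [rpow_sub_one hL.ne']
      field_simp [(rpow_pos_of_pos hL q).ne']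

end GreenBound

lemma log_div_eq_log_div_sub_log_div_s4 {a y z : ℝ} (ha : 0 < a) (hy : 0 < y) (hz : 0 < z) :
    log (y / z) = log (y / a) - log (z / a) := by
  rw [← log_div (by positivity) (by positivity), div_div_div_cancel_right₀ ha.ne']

theorem stmt_4_general (a b μ : ℝ) (ha : 0 < a) (hab : a < b) (hμ2 : 2 < μ) :
    ∀ t ∈ Set.Icc a b, ∀ τ ∈ Set.Icc a b,
      G a b μ t τ ≤
        (Real.log (τ / a) * Real.log (b / τ) ^ (μ - 1)) / (Real.Gamma μ * Real.log (b / a)) := by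
  rintro t ⟨hat, htb⟩ τ ⟨haτ, hτb⟩
  have ht : 0 < t := ha.trans_le hat
  have hτ : 0 < τ := ha.trans_le haτ
  have hq : 1 ≤ μ - 1 := by linarith
  have hΓ : 0 < Gamma μ := Gamma_pos_of_pos (by linarith)
  have hL : 0 < log (b / a) := log_pos ((one_lt_div ha).2 hab)
  have hx : 0 ≤ log (t / a) := log_nonneg ((one_le_div ha).2 hat)
  have hs : 0 ≤ log (τ / a) := log_nonneg ((one_le_div ha).2 haτ)
  have hlog_mono : ∀ {y z : ℝ}, a ≤ y → y ≤ z → log (y / a) ≤ log (z / a) := fun hy hyz =>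
    log_le_log (div_pos (ha.trans_le hy) ha) (by gcongr)
  have hsL : log (τ / a) ≤ log (b / a) := hlog_mono haτ hτb
  unfold G
  split_ifs with hτt <;> refine one_div_mul_le_div_of_le_mul_rpow_sub_one hΓ hL ?_ <;>
    rw [log_div_eq_log_div_sub_log_div_s4 ha (ha.trans hab) hτ]
  · rw [log_div_eq_log_div_sub_log_div_s4 ha ht hτ]
    exact mul_rpow_sub_rpow_mul_le hq hs (hlog_mono haτ hτt) (hlog_mono hat htb)
  · have hxs := rpow_le_mul_rpow_sub_one hq hx (hlog_mono hat (not_le.1 hτt).le)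
      (hlog_mono hat htb)
    linarith [mul_le_mul_of_nonneg_right hxs (rpow_nonneg (sub_nonneg.2 hsL) (μ - 1))]

theorem stmt_4 (a b μ : ℝ) (ha : 0 < a) (hab : a < b) (hμ2 : 2 < μ) (hμ3 : μ < 3) :
    ∀ t ∈ Set.Icc a b, ∀ τ ∈ Set.Icc a b,
      G a b μ t τ ≤
        (Real.log (τ / a) * Real.log (b / τ) ^ (μ - 1)) / (Real.Gamma μ * Real.log (b / a)) :=
  stmt_4_general a b μ ha hab hμ2
end

section
/- Let 0 < a < b and 2 < μ < 3, and let G be the Green's function defined by G(t,τ) = (1/(Γ(μ)·(ln(b/a))^(μ-1))) · [ (ln(t/a))^(μ-1)·(ln(b/τ))^(μ-1) − (ln(t/τ))^(μ-1)·(ln(b/a))^(μ-1) ] for a ≤ τ ≤ t ≤ b, and G(t,τ) = (1/(Γ(μ)·(ln(b/a))^(μ-1))) · (ln(t/a))^(μ-1)·(ln(b/τ))^(μ-1) for a ≤ t ≤ τ ≤ b. Then for all t, τ ∈ [a, b], G(t,τ) ≥ u(t)·v(τ)/(Γ(μ)·(ln(b/a))^(μ+1)), where u(t) = (ln(t/a))^(μ-1)·(ln(b/t))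 and v(τ) = (ln(τ/a))·(ln(b/τ))^(μ-1). -/
/-!
In the coordinates `x = log (t / a)`, `y = log (τ / a)`, `L = log (b / a)` and with `γ = μ - 1`,
`Γ(μ) L^γ G(t, τ)` is `x^γ (L - y)^γ - (x - y)^γ L^γ` for `τ ≤ t` and `x^γ (L - y)^γ` otherwise,
and the bound to prove is `x^γ (L - x) y (L - y)^γ / L²`. For `τ ≤ t` put `s = x (L - y)` and
`r = (x - y) L`, so that `0 ≤ r ≤ s` and `s - r = y (L - x)`. Since `γ ≥ 1`,
`s^γ - r^γ ≥ s^(γ-1) (s - r) = x^(γ-1) (L - y)^(γ-1) y (L - x)`, and `x (L - y) ≤ L²` finishes.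
For `t < τ` it suffices that `(L - x) y ≤ L²`.
-/

open Real

lemma Real.rpow_eq_rpow_sub_one_mul {x γ : ℝ} (hx : 0 ≤ x) (hγ : 1 ≤ γ) :
    x ^ γ = x ^ (γ - 1) * x := by
  have h := rpow_add_one' hx (y := γ - 1) (by linarith)
  rwa [sub_add_cancel] at h

lemma Real.rpow_sub_one_mul_sub_le_rpow_sub_rpow {r s γ : ℝ} (hr : 0 ≤ r) (hrs : r ≤ s)
    (hγ : 1 ≤ γ) : s ^ (γ - 1) * (s - r) ≤ s ^ γ - r ^ γ := by
  have hmono : r ^ (γ - 1) ≤ s ^ (γ - 1) := rpow_le_rpow hr hrs (by linarith)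
  rw [rpow_eq_rpow_sub_one_mul (hr.trans hrs) hγ, rpow_eq_rpow_sub_one_mul hr hγ]
  nlinarith

lemma Real.log_div_eq_log_div_sub_log_div {p q r : ℝ} (hp : p ≠ 0) (hq : q ≠ 0) (hr : r ≠ 0) :
    log (p / q) = log (p / r) - log (q / r) := by
  rw [log_div hp hq, log_div hp hr, log_div hq hr]
  ring

section GreenKernel

variable {γ L x y : ℝ}

lemma green_kernel_lower_bound_of_le (hγ : 1 ≤ γ) (hx0 : 0 ≤ x) (hxL : x ≤ L) (hy0 : 0 ≤ y)
    (hyL : y ≤ L) (hyx : y ≤ x) :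
    x ^ γ * (L - x) * (y * (L - y) ^ γ) ≤ (x ^ γ * (L - y) ^ γ - (x - y) ^ γ * L ^ γ) * L ^ 2 := by
  have hLy : 0 ≤ L - y := by linarith
  have hrs : (x - y) * L ≤ x * (L - y) := by nlinarith
  have hmvt := rpow_sub_one_mul_sub_le_rpow_sub_rpow
    (mul_nonneg (sub_nonneg.mpr hyx) (hx0.trans hxL)) hrs hγ
  rw [mul_rpow hx0 hLy, mul_rpow (sub_nonneg.mpr hyx) (hx0.trans hxL), mul_rpow hx0 hLy,
    show x * (L - y) - (x - y) * L = y * (L - x) by ring] at hmvt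
  have hxLy : x * (L - y) ≤ L ^ 2 := by nlinarith
  have hD : 0 ≤ x ^ (γ - 1) * (L - y) ^ (γ - 1) * (y * (L - x)) :=
    mul_nonneg (by positivity) (mul_nonneg hy0 (by linarith))
  calc x ^ γ * (L - x) * (y * (L - y) ^ γ)
      = x ^ (γ - 1) * (L - y) ^ (γ - 1) * (y * (L - x)) * (x * (L - y)) := by
        rw [rpow_eq_rpow_sub_one_mul hx0 hγ, rpow_eq_rpow_sub_one_mul hLy hγ]; ring
    _ ≤ x ^ (γ - 1) * (L - y) ^ (γ - 1) * (y * (L - x)) * L ^ 2 := by gcongr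
    _ ≤ (x ^ γ * (L - y) ^ γ - (x - y) ^ γ * L ^ γ) * L ^ 2 := by gcongr

lemma green_kernel_lower_bound (hx0 : 0 ≤ x) (hxL : x ≤ L) (hyL : y ≤ L) :
    x ^ γ * (L - x) * (y * (L - y) ^ γ) ≤ x ^ γ * (L - y) ^ γ * L ^ 2 := by
  have hP : 0 ≤ x ^ γ * (L - y) ^ γ := mul_nonneg (rpow_nonneg hx0 _) (rpow_nonneg (by linarith) _)
  have hxy : (L - x) * y ≤ L ^ 2 := by nlinarith
  nlinarith [mul_le_mul_of_nonneg_left hxy hP]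

end GreenKernel

lemma div_mul_rpow_add_one_le_one_div_mul_rpow_sub_one {c L M N μ : ℝ} (hc : 0 < c) (hL : 0 < L)
    (h : M ≤ N * L ^ 2) : M / (c * L ^ (μ + 1)) ≤ 1 / (c * L ^ (μ - 1)) * N := by
  have hLμ : L ^ (μ + 1) = L ^ (μ - 1) * L ^ 2 := by
    rw [show μ + 1 = (μ - 1) + 2 by ring, rpow_add hL, rpow_two]
  rw [hLμ, ← mul_assoc, div_le_iff₀ (by positivity)]
  field_simp
  linarith

theorem stmt_5_general (a b μ : ℝ) (ha : 0 < a) (hab : a < b) (hμ2 : 2 < μ) :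
    ∀ t ∈ Set.Icc a b, ∀ τ ∈ Set.Icc a b,
      (Real.log (t / a) ^ (μ - 1) * Real.log (b / t)) *
          (Real.log (τ / a) * Real.log (b / τ) ^ (μ - 1)) /
          (Real.Gamma μ * Real.log (b / a) ^ (μ + 1)) ≤
        G a b μ t τ := by
  rintro t ⟨hat, htb⟩ τ ⟨haτ, hτb⟩
  have ht : 0 < t := ha.trans_le hat
  have hτ : 0 < τ := ha.trans_le haτ
  have hb : 0 < b := ha.trans hab
  have hlog_le {p q : ℝ} (hp : a ≤ p) (hpq : p ≤ q) : log (p / a) ≤ log (q / a) :=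
    log_le_log (div_pos (ha.trans_le hp) ha) (by gcongr)
  have hlog_nonneg {p : ℝ} (hp : a ≤ p) : 0 ≤ log (p / a) := log_nonneg ((one_le_div ha).mpr hp)
  rw [G, ← mul_ite, log_div_eq_log_div_sub_log_div hb.ne' ht.ne' ha.ne',
    log_div_eq_log_div_sub_log_div hb.ne' hτ.ne' ha.ne',
    log_div_eq_log_div_sub_log_div ht.ne' hτ.ne' ha.ne']
  refine div_mul_rpow_add_one_le_one_div_mul_rpow_sub_one (Gamma_pos_of_pos (by linarith))
    (log_pos ((one_lt_div ha).mpr hab)) ?_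
  split_ifs with hτt
  · exact green_kernel_lower_bound_of_le (by linarith) (hlog_nonneg hat) (hlog_le hat htb)
      (hlog_nonneg haτ) (hlog_le haτ hτb) (hlog_le haτ hτt)
  · exact green_kernel_lower_bound (hlog_nonneg hat) (hlog_le hat htb) (hlog_le haτ hτb)

theorem stmt_5 (a b μ : ℝ) (ha : 0 < a) (hab : a < b) (hμ2 : 2 < μ) (hμ3 : μ < 3) :
    ∀ t ∈ Set.Icc a b, ∀ τ ∈ Set.Icc a b,
      (Real.log (t / a) ^ (μ - 1) * Real.log (b / t)) *
          (Real.log (τ / a) * Real.log (b / τ) ^ (μ - 1)) /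
          (Real.Gamma μ * Real.log (b / a) ^ (μ + 1)) ≤
        G a b μ t τ :=
  stmt_5_general a b μ ha hab hμ2
end

section
/- Let 0 < a < b and 2 < μ < 3, and let G be the Green's function from the Hadamard fractional boundary value problem. Then G(t,τ) ≥ 0 for all t, τ ∈ [a, b], and G(t,τ) > 0 for all t, τ ∈ (a, b). -/
/-!
For `t < τ`, `G` is a positive constant times a product of nonnegative powers. For `τ ≤ t`, with
`p = μ - 1 > 0`, positivity of the bracket reduces, after taking `p`-th roots, to
`log (t/τ) log (b/a) ≤ log (t/a) log (b/τ)`. In the variables `A, S, T, B` = `log` of `a, τ, t, b`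
this is `(T - S)(B - A) ≤ (T - A)(B - S)`, whose difference is `(B - T)(S - A) ≥ 0`.
-/

open Real

theorem sub_mul_sub_eq_sub_mul_sub_add {R : Type*} [CommRing R] (A S T B : R) :
    (T - A) * (B - S) = (T - S) * (B - A) + (B - T) * (S - A) := by
  ring

section Ordered

variable {R : Type*} [CommRing R] [LinearOrder R] [IsStrictOrderedRing R] {A S T B : R}

theorem sub_mul_sub_le_sub_mul_sub (hAS : A ≤ S) (hTB : T ≤ B) :
    (T - S) * (B - A) ≤ (T - A) * (B - S) := by
  rw [sub_mul_sub_eq_sub_mul_sub_add A S T B]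
  exact le_add_of_nonneg_right (mul_nonneg (sub_nonneg.2 hTB) (sub_nonneg.2 hAS))

theorem sub_mul_sub_lt_sub_mul_sub (hAS : A < S) (hTB : T < B) :
    (T - S) * (B - A) < (T - A) * (B - S) := by
  rw [sub_mul_sub_eq_sub_mul_sub_add A S T B]
  exact lt_add_of_pos_right _ (mul_pos (sub_pos.2 hTB) (sub_pos.2 hAS))

end Ordered

section LogCrossRatio

variable {a τ t b : ℝ}

theorem log_div_mul_log_div_le_log_div_mul_log_div (ha : 0 < a) (haτ : a ≤ τ) (ht : 0 < t)
    (htb : t ≤ b) : log (t / τ) * log (b / a) ≤ log (t / a) * log (b / τ) := by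
  have hτ := ha.trans_le haτ
  have hb := ht.trans_le htb
  rw [log_div ht.ne' hτ.ne', log_div hb.ne' ha.ne', log_div ht.ne' ha.ne', log_div hb.ne' hτ.ne']
  exact sub_mul_sub_le_sub_mul_sub (log_le_log ha haτ) (log_le_log ht htb)

theorem log_div_mul_log_div_lt_log_div_mul_log_div (ha : 0 < a) (haτ : a < τ) (ht : 0 < t)
    (htb : t < b) : log (t / τ) * log (b / a) < log (t / a) * log (b / τ) := by
  have hτ := ha.trans haτ
  have hb := ht.trans htb
  rw [log_div ht.ne' hτ.ne', log_div hb.ne' ha.ne', log_div ht.ne' ha.ne', log_div hb.ne' hτ.ne']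
  exact sub_mul_sub_lt_sub_mul_sub (log_lt_log ha haτ) (log_lt_log ht htb)

end LogCrossRatio

theorem log_div_nonneg {x y : ℝ} (hx : 0 < x) (hxy : x ≤ y) : 0 ≤ log (y / x) :=
  log_nonneg ((one_le_div hx).2 hxy)

theorem log_div_pos {x y : ℝ} (hx : 0 < x) (hxy : x < y) : 0 < log (y / x) :=
  log_pos ((one_lt_div hx).2 hxy)

theorem rpow_mul_rpow_le_rpow_mul_rpow {x y u v p : ℝ} (hx : 0 ≤ x) (hy : 0 ≤ y) (hu : 0 ≤ u)
    (hv : 0 ≤ v) (hp : 0 ≤ p) (h : x * y ≤ u * v) : x ^ p * y ^ p ≤ u ^ p * v ^ p := by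
  rw [← mul_rpow hx hy, ← mul_rpow hu hv]
  exact rpow_le_rpow (mul_nonneg hx hy) h hp

theorem rpow_mul_rpow_lt_rpow_mul_rpow {x y u v p : ℝ} (hx : 0 ≤ x) (hy : 0 ≤ y) (hu : 0 ≤ u)
    (hv : 0 ≤ v) (hp : 0 < p) (h : x * y < u * v) : x ^ p * y ^ p < u ^ p * v ^ p := by
  rw [← mul_rpow hx hy, ← mul_rpow hu hv]
  exact rpow_lt_rpow (mul_nonneg hx hy) h hp

section Green

variable {a b μ t τ : ℝ}

theorem G_of_le (h : τ ≤ t) : G a b μ t τ =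
    (1 / (Gamma μ * log (b / a) ^ (μ - 1))) *
      (log (t / a) ^ (μ - 1) * log (b / τ) ^ (μ - 1) -
        log (t / τ) ^ (μ - 1) * log (b / a) ^ (μ - 1)) :=
  if_pos h

theorem G_of_lt (h : t < τ) : G a b μ t τ =
    (1 / (Gamma μ * log (b / a) ^ (μ - 1))) * (log (t / a) ^ (μ - 1) * log (b / τ) ^ (μ - 1)) :=
  if_neg h.not_ge

theorem G_nonneg (ha : 0 < a) (hμ : 1 ≤ μ) (ht : t ∈ Set.Icc a b) (hτ : τ ∈ Set.Icc a b) :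
    0 ≤ G a b μ t τ := by
  obtain ⟨hat, htb⟩ := ht
  obtain ⟨haτ, hτb⟩ := hτ
  have hτ0 := ha.trans_le haτ
  have hcoeff : 0 ≤ 1 / (Gamma μ * log (b / a) ^ (μ - 1)) :=
    one_div_nonneg.2 (mul_nonneg (Gamma_pos_of_pos (by linarith)).le
      (rpow_nonneg (log_div_nonneg ha (hat.trans htb)) _))
  rcases le_or_gt τ t with h | h
  · rw [G_of_le h]
    refine mul_nonneg hcoeff (sub_nonneg.2 ?_)
    exact rpow_mul_rpow_le_rpow_mul_rpow (log_div_nonneg hτ0 h) (log_div_nonneg ha (hat.trans htb))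
      (log_div_nonneg ha hat) (log_div_nonneg hτ0 hτb) (by linarith)
      (log_div_mul_log_div_le_log_div_mul_log_div ha haτ (ha.trans_le hat) htb)
  · rw [G_of_lt h]
    exact mul_nonneg hcoeff (mul_nonneg (rpow_nonneg (log_div_nonneg ha hat) _)
      (rpow_nonneg (log_div_nonneg hτ0 hτb) _))

theorem G_pos (ha : 0 < a) (hμ : 1 < μ) (ht : t ∈ Set.Ioo a b) (hτ : τ ∈ Set.Ioo a b) :
    0 < G a b μ t τ := by
  obtain ⟨hat, htb⟩ := ht
  obtain ⟨haτ, hτb⟩ := hτ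
  have hτ0 := ha.trans haτ
  have hcoeff : 0 < 1 / (Gamma μ * log (b / a) ^ (μ - 1)) :=
    one_div_pos.2 (mul_pos (Gamma_pos_of_pos (by linarith))
      (rpow_pos_of_pos (log_div_pos ha (hat.trans htb)) _))
  rcases le_or_gt τ t with h | h
  · rw [G_of_le h]
    refine mul_pos hcoeff (sub_pos.2 ?_)
    exact rpow_mul_rpow_lt_rpow_mul_rpow (log_div_nonneg hτ0 h)
      (log_div_pos ha (hat.trans htb)).le (log_div_pos ha hat).le (log_div_pos hτ0 hτb).le
      (by linarith) (log_div_mul_log_div_lt_log_div_mul_log_div ha haτ (ha.trans hat) htb)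
  · rw [G_of_lt h]
    exact mul_pos hcoeff (mul_pos (rpow_pos_of_pos (log_div_pos ha hat) _)
      (rpow_pos_of_pos (log_div_pos hτ0 hτb) _))

end Green

theorem stmt_7_general (a b μ : ℝ) (ha : 0 < a) (hμ2 : 2 < μ) :
    (∀ t ∈ Set.Icc a b, ∀ τ ∈ Set.Icc a b, 0 ≤ G a b μ t τ) ∧
      (∀ t ∈ Set.Ioo a b, ∀ τ ∈ Set.Ioo a b, 0 < G a b μ t τ) :=
  ⟨fun _ ht _ hτ => G_nonneg ha (by linarith) ht hτ,
    fun _ ht _ hτ => G_pos ha (by linarith) ht hτ⟩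

theorem stmt_7 (a b μ : ℝ) (ha : 0 < a) (hab : a < b) (hμ2 : 2 < μ) (hμ3 : μ < 3) :
    (∀ t ∈ Set.Icc a b, ∀ τ ∈ Set.Icc a b, 0 ≤ G a b μ t τ) ∧
      (∀ t ∈ Set.Ioo a b, ∀ τ ∈ Set.Ioo a b, 0 < G a b μ t τ) :=
  stmt_7_general a b μ ha hμ2
end
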